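/- arXiv:2211.11429 — 4 statements merged into one kernel-verified Lean document; each statement's English description precedes it below -/
import Mathlib

section
/- Let G be a compact group acting linearly and continuously on a Banach space E (with each g acting by a bounded operator, the action map G × E → E continuous). Then for every n ≥ 0, the coboundary map δⁿ from continuous n-cochains Cⁿ(G,E) to continuous (n+1)-cocycles Z^{n+1}(G,E) is surjective: every continuous (n+1)-cocycle is the coboundary of a continuous n-cochain. -/
/-- The inhomogeneous group-cohomology coboundary operator on (not necessarily
continuous) `n`-cochains `Gⁿ → E`. -/
def groupCoboundary {G E : Type*} [Group G] [AddCommGroup E] [DistribMulAction G E]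
    (n : ℕ) (f : (Fin n → G) → E) : (Fin (n + 1) → G) → E :=
  fun g =>
    g 0 • f (fun i => g i.succ)
      + (Finset.range n).sum (fun i =>
          (-1 : ℤ) ^ (i + 1) • f (fun j =>
            if (j : ℕ) < i then g (Fin.castSucc j)
            else if (j : ℕ) = i then g (Fin.castSucc j) * g j.succ
            else g j.succ))
      + (-1 : ℤ) ^ (n + 1) • f (fun j => g (Fin.castSucc j))

/-!
Averaging against a right-invariant probability measure `μ` on `G` (the image of the normalised
Haar measure under inversion) is a contracting homotopy. For a cochain `a` put
`b(v) = ∫ s⁻¹ • a(s, v) dμ(s)`. Evaluating `δa` at `(s, g₀, …, gₙ)` and applying `s⁻¹` gives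
`δ(s⁻¹ • a(s, ·))(g) = a(g) - φ(s g₀) + φ(s) - s⁻¹ • δa(s, g)` with
`φ(s) = g₀ • s⁻¹ • a(s, g₁, …, gₙ)`, and the `φ`-terms cancel after integration by right
invariance, so `δb = a` whenever `δa = 0`. The cochain `b` is continuous because integration is
Lipschitz on `C(G, E)` for the sup norm.
-/

open MeasureTheory

theorem Continuous.integrable_of_compactSpace {X E : Type*} [TopologicalSpace X] [CompactSpace X]
    [MeasurableSpace X] [OpensMeasurableSpace X] [NormedAddCommGroup E] {μ : Measure X}
    [IsFiniteMeasure μ] {f : X → E} (hf : Continuous f) : Integrable f μ :=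
  hf.integrable_of_hasCompactSupport (.of_compactSpace f)

namespace MeasureTheory

variable {X E : Type*} [MeasurableSpace X] [NormedAddCommGroup E] [NormedSpace ℝ E]
  {μ : Measure X} {f : X → E}

@[fun_prop]
theorem Integrable.zsmul (z : ℤ) (hf : Integrable f μ) : Integrable (fun x => z • f x) μ :=
  (hf.smul (z : ℝ)).congr (ae_of_all _ fun x => Int.cast_smul_eq_zsmul ℝ z (f x))

theorem integral_zsmul (z : ℤ) (f : X → E) : ∫ x, z • f x ∂μ = z • ∫ x, f x ∂μ := by
  simpa only [Int.cast_smul_eq_zsmul] using integral_smul (z : ℝ) f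

variable {M : Type*} [Monoid M] [DistribMulAction M E] [SMulCommClass M ℝ E]
  [ContinuousConstSMul M E]

@[fun_prop]
theorem Integrable.distribSMul (t : M) (hf : Integrable f μ) :
    Integrable (fun x => t • f x) μ :=
  ContinuousLinearMap.integrable_comp
    { DistribSMul.toLinearMap ℝ E t with cont := continuous_const_smul t } hf

theorem integral_distribSMul [CompleteSpace E] (t : M) (hf : Integrable f μ) :
    ∫ x, t • f x ∂μ = t • ∫ x, f x ∂μ :=
  ContinuousLinearMap.integral_comp_comm
    { DistribSMul.toLinearMap ℝ E t with cont := continuous_const_smul t } hf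

end MeasureTheory

theorem ContinuousMap.lipschitzWith_integral {X E : Type*} [TopologicalSpace X] [CompactSpace X]
    [MeasurableSpace X] [OpensMeasurableSpace X] [NormedAddCommGroup E] [NormedSpace ℝ E]
    (μ : Measure X) [IsFiniteMeasure μ] :
    LipschitzWith (measureUnivNNReal μ) fun f : C(X, E) => ∫ x, f x ∂μ := by
  refine .of_dist_le_mul fun f g => ?_
  rw [dist_eq_norm, ← integral_sub f.continuous.integrable_of_compactSpace
    g.continuous.integrable_of_compactSpace, mul_comm, dist_eq_norm]
  exact norm_integral_le_of_norm_le_const (ae_of_all _ fun x => (f - g).norm_coe_le_norm x)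

theorem continuous_integral_of_continuous_uncurry {Y X E : Type*} [TopologicalSpace Y]
    [TopologicalSpace X] [CompactSpace X] [MeasurableSpace X] [OpensMeasurableSpace X]
    [NormedAddCommGroup E] [NormedSpace ℝ E] (μ : Measure X) [IsFiniteMeasure μ]
    {F : Y → X → E} (hF : Continuous (Function.uncurry F)) :
    Continuous fun y => ∫ x, F y x ∂μ :=
  (ContinuousMap.lipschitzWith_integral μ).continuous.comp (ContinuousMap.curry ⟨_, hF⟩).continuous

theorem exists_isProbabilityMeasure_isMulRightInvariant (G : Type*) [Group G] [TopologicalSpace G]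
    [IsTopologicalGroup G] [CompactSpace G] [MeasurableSpace G] [BorelSpace G] :
    ∃ μ : Measure G, IsProbabilityMeasure μ ∧ μ.IsMulRightInvariant := by
  refine ⟨(Measure.haarMeasure ⊤).inv, ⟨?_⟩, inferInstance⟩
  rw [Measure.inv_apply, Set.inv_univ]
  exact Measure.haarMeasure_self

section Algebraic

variable {G E : Type*} [Group G] [AddCommGroup E] [DistribMulAction G E]

def twistedSlice {n : ℕ} (a : (Fin (n + 1) → G) → E) (s : G) : (Fin n → G) → E :=
  fun v => s⁻¹ • a (Fin.cons s v)

theorem groupCoboundary_twistedSlice {n : ℕ} (a : (Fin (n + 1) → G) → E) (s : G)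
    (g : Fin (n + 1) → G) :
    groupCoboundary n (twistedSlice a s) g =
      a g - g 0 • twistedSlice a (s * g 0) (Fin.tail g) + g 0 • twistedSlice a s (Fin.tail g)
        - s⁻¹ • groupCoboundary (n + 1) a (Fin.cons s g) := by
  have hfirst : (fun j : Fin (n + 1) =>
      if (j : ℕ) < 0 then (Fin.cons s g : Fin (n + 2) → G) j.castSucc
      else if (j : ℕ) = 0 then (Fin.cons s g : Fin (n + 2) → G) j.castSucc * g j else g j)
      = Fin.cons (s * g 0) (Fin.tail g) := by
    ext j; cases j using Fin.cases <;> simp [Fin.tail]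
  have hmid (k : ℕ) : (fun j : Fin (n + 1) =>
      if (j : ℕ) < k + 1 then (Fin.cons s g : Fin (n + 2) → G) j.castSucc
      else if (j : ℕ) = k + 1 then (Fin.cons s g : Fin (n + 2) → G) j.castSucc * g j else g j)
      = Fin.cons s (fun j : Fin n => if (j : ℕ) < k then g j.castSucc
          else if (j : ℕ) = k then g j.castSucc * g j.succ else g j.succ) := by
    ext j; cases j using Fin.cases <;> simp
  have hlast : (fun j : Fin (n + 1) => (Fin.cons s g : Fin (n + 2) → G) j.castSucc)
      = Fin.cons s (fun j : Fin n => g j.castSucc) := by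
    ext j; cases j using Fin.cases <;> simp
  have hsign (k : ℕ) (x : E) : (-1 : ℤ) ^ (k + 1 + 1) • x = -((-1 : ℤ) ^ (k + 1) • x) := by
    rw [pow_succ, mul_neg_one, neg_smul]
  have hcomm (z : ℤ) (x : E) : s⁻¹ • z • x = z • s⁻¹ • x := smul_comm _ _ _
  simp only [groupCoboundary, twistedSlice, Fin.cons_zero, Fin.cons_succ, Finset.sum_range_succ']
  rw [hfirst, hlast]
  simp only [hmid, hsign, zero_add, pow_one, neg_smul, one_smul, mul_inv_rev, mul_smul,
    smul_inv_smul, inv_smul_smul, smul_add, smul_neg, Finset.smul_sum, hcomm,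
    Finset.sum_neg_distrib]
  unfold Fin.tail
  abel

theorem continuous_twistedSlice [TopologicalSpace G] [ContinuousInv G] [TopologicalSpace E]
    [ContinuousSMul G E] {n : ℕ} {a : (Fin (n + 1) → G) → E} (ha : Continuous a) :
    Continuous (Function.uncurry fun v s => twistedSlice a s v) := by
  unfold twistedSlice Function.uncurry
  fun_prop

end Algebraic

section Averaging

variable {G E : Type*} [Group G] [NormedAddCommGroup E] [NormedSpace ℝ E] [CompleteSpace E]
  [DistribMulAction G E] [SMulCommClass G ℝ E]

theorem groupCoboundary_integral [ContinuousConstSMul G E] {X : Type*} [MeasurableSpace X]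
    {μ : Measure X} {n : ℕ} {c : X → (Fin n → G) → E}
    (hc : ∀ v, Integrable (fun x => c x v) μ) (g : Fin (n + 1) → G) :
    groupCoboundary n (fun v => ∫ x, c x v ∂μ) g = ∫ x, groupCoboundary n (c x) g ∂μ := by
  simp only [groupCoboundary]
  rw [integral_add, integral_add, integral_finsetSum, integral_distribSMul _ (hc _), integral_zsmul]
  · simp only [integral_zsmul]
  all_goals fun_prop

theorem groupCoboundary_integral_twistedSlice [TopologicalSpace G] [IsTopologicalGroup G]
    [CompactSpace G] [MeasurableSpace G] [BorelSpace G] [ContinuousSMul G E] (μ : Measure G)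
    [IsProbabilityMeasure μ] [μ.IsMulRightInvariant] {n : ℕ} {a : (Fin (n + 1) → G) → E}
    (ha : Continuous a) (hcoc : groupCoboundary (n + 1) a = 0) :
    groupCoboundary n (fun v => ∫ s, twistedSlice a s v ∂μ) = a := by
  have hslice (v : Fin n → G) : Continuous fun s => twistedSlice a s v :=
    (continuous_twistedSlice ha).comp (continuous_const.prodMk continuous_id)
  funext g
  let φ : G → E := fun s => g 0 • twistedSlice a s (Fin.tail g)
  have hφ : Integrable φ μ := ((hslice _).const_smul _).integrable_of_compactSpace
  have hφ_shift : Integrable (fun s => φ (s * g 0)) μ :=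
    (((hslice _).const_smul _).comp (continuous_mul_const _)).integrable_of_compactSpace
  calc groupCoboundary n (fun v => ∫ s, twistedSlice a s v ∂μ) g
      = ∫ s, a g - φ (s * g 0) + φ s ∂μ := by
        rw [groupCoboundary_integral fun v => (hslice v).integrable_of_compactSpace]
        simp only [groupCoboundary_twistedSlice, hcoc, Pi.zero_apply, smul_zero, sub_zero, φ]
    _ = a g - ∫ s, φ (s * g 0) ∂μ + ∫ s, φ s ∂μ := by
        rw [integral_add (f := fun s => a g - φ (s * g 0)) ((integrable_const _).sub hφ_shift) hφ,
          integral_sub (integrable_const _) hφ_shift, integral_const, probReal_univ, one_smul]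
    _ = a g := by rw [integral_mul_right_eq_self φ, sub_add_cancel]

end Averaging

/-- For a compact group `G` acting linearly and continuously on a Banach
space `E`, every continuous `(n+1)`-cocycle is the coboundary of a continuous
`n`-cochain. -/
theorem coboundary_surjective_onto_cocycles
    {G : Type*} [Group G] [TopologicalSpace G] [IsTopologicalGroup G] [CompactSpace G]
    {E : Type*} [NormedAddCommGroup E] [NormedSpace ℝ E] [CompleteSpace E]
    [DistribMulAction G E] [SMulCommClass G ℝ E]
    (hact : Continuous fun p : G × E => p.1 • p.2)
    (n : ℕ) (a : (Fin (n + 1) → G) → E) (ha : Continuous a)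
    (hcoc : groupCoboundary (n + 1) a = 0) :
    ∃ b : (Fin n → G) → E, Continuous b ∧ groupCoboundary n b = a := by
  borelize G
  have : ContinuousSMul G E := ⟨hact⟩
  obtain ⟨μ, _, _⟩ := exists_isProbabilityMeasure_isMulRightInvariant G
  exact ⟨_, continuous_integral_of_continuous_uncurry μ (continuous_twistedSlice ha),
    groupCoboundary_integral_twistedSlice μ ha hcoc⟩
end

section
/- Let G be a compact group acting continuously on a Banach space E by bounded linear maps. Then every continuous group cohomology group Hⁿ(G,E) vanishes for n ≥ 1. -/
open MeasureTheory

section Coboundary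

variable {G E : Type*} [Group G] [AddCommGroup E] [DistribMulAction G E]

theorem groupCoboundary_zsmul (n : ℕ) (c : ℤ) (f : (Fin n → G) → E) :
    groupCoboundary n (c • f) = c • groupCoboundary n f := by
  funext g
  simp only [groupCoboundary, Pi.smul_apply, smul_add, Finset.smul_sum, smul_comm c]

theorem groupCoboundary_succ_snoc {m : ℕ} (a : (Fin (m + 1) → G) → E) (g : Fin (m + 1) → G)
    (x : G) :
    groupCoboundary (m + 1) a (Fin.snoc g x) =
      groupCoboundary m (fun u => a (Fin.snoc u x)) g
        + (-1 : ℤ) ^ (m + 1) • (a (Fin.snoc (Fin.init g) (g (Fin.last m) * x))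
          - a (Fin.snoc (Fin.init g) x))
        + (-1 : ℤ) ^ (m + 2) • a g := by
  have hzero : (Fin.snoc g x : Fin (m + 2) → G) 0 = g 0 := by simp
  have htail : (fun i : Fin (m + 1) => (Fin.snoc g x : Fin (m + 2) → G) i.succ)
      = Fin.snoc (fun i => g i.succ) x := by
    funext j
    refine Fin.lastCases ?_ (fun k => ?_) j
    · simp [Fin.succ_last]
    · simp only [Fin.succ_castSucc, Fin.snoc_castSucc]
  have hmerge : ∀ i < m, (fun j : Fin (m + 1) =>
      if (j : ℕ) < i then (Fin.snoc g x : Fin (m + 2) → G) j.castSucc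
      else if (j : ℕ) = i then
        (Fin.snoc g x : Fin (m + 2) → G) j.castSucc * (Fin.snoc g x : Fin (m + 2) → G) j.succ
      else (Fin.snoc g x : Fin (m + 2) → G) j.succ)
      = Fin.snoc (fun j : Fin m => if (j : ℕ) < i then g j.castSucc
          else if (j : ℕ) = i then g j.castSucc * g j.succ else g j.succ) x := by
    intro i hi
    funext j
    refine Fin.lastCases ?_ (fun k => ?_) j
    · simp [Fin.succ_last, hi.not_gt, hi.ne']
    · simp [Fin.succ_castSucc, -Fin.castSucc_succ]
  have hlast : (fun j : Fin (m + 1) =>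
      if (j : ℕ) < m then (Fin.snoc g x : Fin (m + 2) → G) j.castSucc
      else if (j : ℕ) = m then
        (Fin.snoc g x : Fin (m + 2) → G) j.castSucc * (Fin.snoc g x : Fin (m + 2) → G) j.succ
      else (Fin.snoc g x : Fin (m + 2) → G) j.succ)
      = Fin.snoc (Fin.init g) (g (Fin.last m) * x) := by
    funext j
    refine Fin.lastCases ?_ (fun k => ?_) j
    · simp [Fin.succ_last]
    · simp [Fin.init]
  have hinit : (fun j : Fin (m + 1) => (Fin.snoc g x : Fin (m + 2) → G) j.castSucc) = g :=
    Fin.init_snoc (α := fun _ => G) (p := g) (x := x)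
  have hinit' : (fun j : Fin m => g j.castSucc) = Fin.init g := rfl
  simp only [groupCoboundary, Finset.sum_range_succ, hzero, htail, hlast, hinit, hinit']
  rw [Finset.sum_congr rfl fun i hi => by rw [hmerge i (Finset.mem_range.mp hi)], smul_sub]
  abel

end Coboundary

section Integral

variable {α G E : Type*} [MeasurableSpace α] {μ : Measure α} [Group G]
  [NormedAddCommGroup E] [NormedSpace ℝ E] [DistribMulAction G E] [SMulCommClass G ℝ E]
  [ContinuousConstSMul G E]

variable (E) in
def DistribMulAction.toContinuousLinearMap (g : G) : E →L[ℝ] E :=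
  ⟨DistribSMul.toLinearMap ℝ E g, continuous_const_smul g⟩

theorem integrable_groupCoboundary {n : ℕ} {F : α → (Fin n → G) → E}
    (hF : ∀ u, Integrable (fun x => F x u) μ) (g : Fin (n + 1) → G) :
    Integrable (fun x => groupCoboundary n (F x) g) μ := by
  have hL : ∀ u, Integrable (fun x => g 0 • F x u) μ := fun u =>
    (DistribMulAction.toContinuousLinearMap E (g 0)).integrable_comp (hF u)
  unfold groupCoboundary
  simp_rw [← Int.cast_smul_eq_zsmul ℝ]
  fun_prop

theorem integral_groupCoboundary [CompleteSpace E] {n : ℕ} {F : α → (Fin n → G) → E}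
    (hF : ∀ u, Integrable (fun x => F x u) μ) (g : Fin (n + 1) → G) :
    ∫ x, groupCoboundary n (F x) g ∂μ = groupCoboundary n (fun u => ∫ x, F x u ∂μ) g := by
  let L := DistribMulAction.toContinuousLinearMap E (g 0)
  simp_rw [groupCoboundary, ← Int.cast_smul_eq_zsmul ℝ]
  have hL : ∀ u, Integrable (fun x => g 0 • F x u) μ := fun u => L.integrable_comp (hF u)
  have hL_integral : ∀ u, ∫ x, g 0 • F x u ∂μ = g 0 • ∫ x, F x u ∂μ := fun u =>
    L.integral_comp_comm (hF u)
  rw [integral_add, integral_add, integral_finsetSum]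
  · simp only [hL_integral, integral_smul]
  all_goals fun_prop

end Integral

section Average

variable {G E : Type*} [MeasurableSpace G]
  [NormedAddCommGroup E] [NormedSpace ℝ E] {m : ℕ}

noncomputable def snocAverage (μ : Measure G) (a : (Fin (m + 1) → G) → E) :
    (Fin m → G) → E :=
  fun u => ∫ x, a (Fin.snoc u x) ∂μ

@[simp]
theorem snocAverage_zero (μ : Measure G) : snocAverage μ (0 : (Fin (m + 1) → G) → E) = 0 := by
  funext u
  simp [snocAverage]

variable [TopologicalSpace G] [CompactSpace G] [OpensMeasurableSpace G]
  (μ : Measure G) {a : (Fin (m + 1) → G) → E}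

theorem continuous_snocAverage [IsFiniteMeasure μ] (ha : Continuous a) : Continuous (snocAverage μ a) :=
  continuousOn_univ.1 <| continuousOn_integral_of_compact_support isCompact_univ
    (ha.comp (by fun_prop)).continuousOn (by simp)

theorem snocAverage_groupCoboundary [Group G] [ContinuousMul G] [BorelSpace G]
    [DistribMulAction G E] [SMulCommClass G ℝ E] [ContinuousConstSMul G E] [CompleteSpace E]
    [IsProbabilityMeasure μ] [μ.IsMulLeftInvariant] (ha : Continuous a) :
    snocAverage μ (groupCoboundary (m + 1) a) =
      groupCoboundary m (snocAverage μ a) + (-1 : ℤ) ^ m • a := by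
  funext g
  have hsnoc : ∀ u, Integrable (fun x => a (Fin.snoc u x)) μ := fun u =>
    (ha.comp (by fun_prop)).integrable_of_hasCompactSupport (.of_compactSpace _)
  have hinvariant : ∫ x, a (Fin.snoc (Fin.init g) (g (Fin.last m) * x)) ∂μ
      = ∫ x, a (Fin.snoc (Fin.init g) x) ∂μ :=
    integral_mul_left_eq_self (fun x => a (Fin.snoc (Fin.init g) x)) _
  have hinit := hsnoc (Fin.init g)
  have hshifted := hinit.comp_mul_left (g (Fin.last m))
  have hcob := integrable_groupCoboundary hsnoc g
  have hcorr := (hshifted.sub hinit).smul (((-1) ^ (m + 1) : ℤ) : ℝ)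
  simp only [snocAverage, groupCoboundary_succ_snoc, Pi.add_apply, Pi.smul_apply]
  simp_rw [← Int.cast_smul_eq_zsmul ℝ]
  rw [integral_add, integral_add, integral_groupCoboundary hsnoc, integral_smul,
    integral_smul, integral_sub, hinvariant, sub_self]
  · simp [pow_add]
    rfl
  exacts [hshifted, hinit, hcob, hcorr, hcob.add hcorr, integrable_const _]

end Average

theorem isProbabilityMeasure_haarMeasure_top {G : Type*} [Group G] [TopologicalSpace G]
    [IsTopologicalGroup G] [CompactSpace G] [MeasurableSpace G] [BorelSpace G] :
    IsProbabilityMeasure (Measure.haarMeasure (⊤ : TopologicalSpace.PositiveCompacts G)) where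
  measure_univ := by
    rw [← TopologicalSpace.PositiveCompacts.coe_top]
    exact Measure.haarMeasure_self

/-- For a compact group `G` acting continuously by bounded linear maps on
a Banach space `E`, the continuous group cohomology `Hⁿ(G, E)` vanishes for all
`n = m + 1 ≥ 1`: every continuous `n`-cocycle is the coboundary of a continuous
`(n-1)`-cochain. -/
theorem continuous_group_cohomology_vanishes
    {G : Type*} [Group G] [TopologicalSpace G] [IsTopologicalGroup G] [CompactSpace G]
    {E : Type*} [NormedAddCommGroup E] [NormedSpace ℝ E] [CompleteSpace E]
    [DistribMulAction G E] [SMulCommClass G ℝ E]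
    (hact : Continuous fun p : G × E => p.1 • p.2)
    (m : ℕ) (a : (Fin (m + 1) → G) → E) (ha : Continuous a)
    (hcoc : groupCoboundary (m + 1) a = 0) :
    ∃ b : (Fin m → G) → E, Continuous b ∧ groupCoboundary m b = a := by
  have : ContinuousSMul G E := ⟨hact⟩
  borelize G
  let μ := Measure.haarMeasure (⊤ : TopologicalSpace.PositiveCompacts G)
  have : IsProbabilityMeasure μ := isProbabilityMeasure_haarMeasure_top
  have hprimitive : groupCoboundary m (snocAverage μ a) = -((-1 : ℤ) ^ m • a) := by
    have hδ := snocAverage_groupCoboundary μ ha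
    rw [hcoc, snocAverage_zero] at hδ
    exact eq_neg_of_add_eq_zero_left hδ.symm
  refine ⟨(-1 : ℤ) ^ (m + 1) • snocAverage μ a,
    (continuous_snocAverage μ ha).const_smul _, ?_⟩
  rw [groupCoboundary_zsmul, hprimitive, smul_neg, smul_smul, ← pow_add,
    (show Odd (m + 1 + m) from ⟨m, by ring⟩).neg_one_pow, neg_one_smul, neg_neg]
end

section
/- Let φ: A → B be a unital homomorphism of Banach algebras with A finite-dimensional. If φ annihilates the Jacobson radical rad(A), then the orbit of φ under conjugation by the group B^× of invertible elements (acting by φ ↦ u·φ·u⁻¹) is closed in the space of unital Banach-algebra homomorphisms A → B (with the operator-norm topology). -/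
/-!
Every conjugate of `φ` kills `rad A`, hence so does every limit `ψ` of conjugates; `ψ` and the
nearby conjugates `χ` therefore factor through `A ⧸ rad A`, whose radical is zero. In
characteristic zero the trace form `τ (a, b) = tr (a * b * ·)` of such an algebra is
nondegenerate, and a basis `(xᵢ)` with its `τ`-dual basis `(yᵢ)` satisfies `∑ xᵢ yᵢ = 1` and
`∑ a xᵢ ⊗ yᵢ = ∑ xᵢ ⊗ yᵢ a`. So `u = ∑ ψ xᵢ * χ yᵢ` satisfies `ψ a * u = u * χ a`, and
`‖u - 1‖ ≤ ‖χ - ψ‖ ∑ ‖ψ xᵢ‖ ‖yᵢ‖`, so `u` is invertible and conjugates `χ` to `ψ` once `χ` is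
close to `ψ`.
-/

open Polynomial

namespace Module.End
variable {K V : Type*} [Field K] [AddCommGroup V] [Module K V]

theorem trace_aeval_X_mul_eq_zero {f : Module.End K V}
    (h : ∀ k : ℕ, LinearMap.trace K V (f ^ (k + 1)) = 0) (g : K[X]) :
    LinearMap.trace K V (aeval f (X * g)) = 0 := by
  induction g using Polynomial.induction_on' with
  | add p q hp hq => rw [mul_add, map_add, map_add, hp, hq, add_zero]
  | monomial n c =>
    rw [X_mul_monomial, aeval_monomial, ← Algebra.smul_def, map_smul, h, smul_zero]

theorem isNilpotent_of_trace_pow_eq_zero [CharZero K] [FiniteDimensional K V] {f : Module.End K V}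
    (h : ∀ k : ℕ, LinearMap.trace K V (f ^ (k + 1)) = 0) : IsNilpotent f := by
  obtain ⟨q, hpq, hXq⟩ :=
    (minpoly K f).exists_eq_pow_rootMultiplicity_mul_and_not_dvd (minpoly.ne_zero_of_finite K f) 0
  set m := (minpoly K f).rootMultiplicity 0
  rw [C_0, sub_zero] at hpq hXq
  obtain ⟨u, v, huv⟩ := (irreducible_X.coprime_iff_not_dvd.mpr hXq).pow_left (m := m + 1)
  -- `e` is the spectral projection for the eigenvalue `0`, so its trace is its rank
  set e := aeval f (u * X ^ (m + 1))
  have he_add : e + aeval f (v * q) = 1 := by rw [← map_add, huv, map_one]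
  have he_mul : e * aeval f (v * q) = 0 := by
    rw [← map_mul, show u * X ^ (m + 1) * (v * q) = u * v * X * (X ^ m * q) by ring, ← hpq,
      map_mul, minpoly.aeval, mul_zero]
  have he : IsIdempotentElem e :=
    calc e * e = e * (1 - aeval f (v * q)) := by rw [← he_add, add_sub_cancel_right]
      _ = e := by rw [mul_sub, he_mul, mul_one, sub_zero]
  have he0 : e = 0 := LinearMap.IsIdempotentElem.eq_zero_of_trace_eq_zero he <| by
    change LinearMap.trace K V (aeval f (u * X ^ (m + 1))) = 0
    rw [show u * X ^ (m + 1) = X * (u * X ^ m) by ring]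
    exact trace_aeval_X_mul_eq_zero h _
  have hvq : aeval f (v * q) = 1 := by rwa [he0, zero_add] at he_add
  refine ⟨m, ?_⟩
  calc f ^ m = aeval f (X ^ m * (v * q)) := by rw [map_mul, hvq, mul_one, map_pow, aeval_X]
    _ = aeval f (v * minpoly K f) := by rw [hpq, mul_left_comm]
    _ = 0 := by rw [map_mul, minpoly.aeval, mul_zero]

end Module.End

theorem mem_jacobson_of_forall_isNilpotent_mul {R : Type*} [Ring R] {a : R}
    (h : ∀ c, IsNilpotent (a * c)) : a ∈ Ring.jacobson R := by
  rw [← Ideal.jacobson_bot, Ideal.mem_jacobson_iff]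
  intro y
  obtain ⟨n, hn⟩ := h y
  have hya : IsNilpotent (y * a) :=
    ⟨n + 1, by rw [pow_succ', mul_assoc, SemiconjBy.pow_right (mul_assoc a y a).symm n,
      hn, zero_mul, mul_zero]⟩
  obtain ⟨u, hu⟩ := hya.isUnit_add_one
  refine ⟨↑u⁻¹, ?_⟩
  rw [Ideal.mem_bot, mul_assoc, ← mul_add_one, ← hu, Units.inv_mul, sub_self]

section RegularTraceForm

variable (K A : Type*) [Field K] [Ring A] [Algebra K A]

noncomputable def regularTraceForm : LinearMap.BilinForm K A :=
  (LinearMap.mul K A).compr₂ (LinearMap.trace K A ∘ₗ LinearMap.mul K A)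

variable {K A}

theorem regularTraceForm_apply (a b : A) :
    regularTraceForm K A a b = LinearMap.trace K A (LinearMap.mulLeft K (a * b)) := rfl

theorem regularTraceForm_isSymm : (regularTraceForm K A).IsSymm :=
  ⟨fun a b => by
    simp only [regularTraceForm_apply, LinearMap.mulLeft_mul]
    exact LinearMap.trace_mul_comm K _ _⟩

theorem regularTraceForm_mul_left (a b c : A) :
    regularTraceForm K A (a * b) c = regularTraceForm K A a (b * c) := by
  rw [regularTraceForm_apply, regularTraceForm_apply, mul_assoc]

theorem regularTraceForm_nondegenerate [CharZero K] [FiniteDimensional K A]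
    (hJ : Ring.jacobson A = ⊥) : (regularTraceForm K A).Nondegenerate := by
  refine (LinearMap.IsRefl.nondegenerate_iff_separatingLeft (B := regularTraceForm K A)
    regularTraceForm_isSymm.isRefl).mpr fun a ha => ?_
  rw [← Ideal.mem_bot, ← hJ]
  refine mem_jacobson_of_forall_isNilpotent_mul fun c => ?_
  rw [← LinearMap.isNilpotent_mulLeft_iff K]
  refine Module.End.isNilpotent_of_trace_pow_eq_zero fun k => ?_
  rw [LinearMap.pow_mulLeft, pow_succ', mul_assoc, ← regularTraceForm_apply]
  exact ha _

end RegularTraceForm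

section Separability

open TensorProduct LinearMap.BilinForm

variable {K A : Type*} [Field K] [Ring A] [Algebra K A] {ι : Type*} [Fintype ι] [DecidableEq ι]
  (hτ : (regularTraceForm K A).Nondegenerate) (b : Module.Basis ι K A)

local notation "τ" => regularTraceForm K A

theorem repr_eq_regularTraceForm_dualBasis (x : A) (i : ι) :
    b.repr x i = τ x (dualBasis τ hτ b i) := by
  conv_lhs => rw [← dualBasis_dualBasis hτ regularTraceForm_isSymm b]
  exact dualBasis_repr_apply hτ _ x i

theorem sum_regularTraceForm_dualBasis_smul (x : A) :
    ∑ i, τ x (dualBasis τ hτ b i) • b i = x := by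
  simp_rw [← repr_eq_regularTraceForm_dualBasis, b.sum_repr]

theorem sum_regularTraceForm_smul_dualBasis (x : A) :
    ∑ i, τ x (b i) • dualBasis τ hτ b i = x := by
  simp_rw [← dualBasis_repr_apply hτ b, Module.Basis.sum_repr]

theorem sum_mul_dualBasis_regularTraceForm_eq_one : ∑ i, b i * dualBasis τ hτ b i = 1 := by
  rw [← sub_eq_zero]
  -- both sides pair with `m` to the trace of left multiplication by `m`
  refine hτ.2 _ fun m => ?_
  have htrace :
      LinearMap.trace K A (LinearMap.mulLeft K m) = ∑ i, τ (m * b i) (dualBasis τ hτ b i) := by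
    simp_rw [LinearMap.trace_eq_matrix_trace K b, Matrix.trace, Matrix.diag_apply,
      LinearMap.toMatrix_apply, LinearMap.mulLeft_apply, repr_eq_regularTraceForm_dualBasis hτ]
  rw [map_sub, map_sum, sub_eq_zero]
  simp_rw [← regularTraceForm_mul_left, ← htrace, regularTraceForm_apply, mul_one]

theorem sum_mul_tmul_dualBasis_eq_sum_tmul_mul (a : A) :
    ∑ i, (a * b i) ⊗ₜ[K] dualBasis τ hτ b i = ∑ i, b i ⊗ₜ[K] (dualBasis τ hτ b i * a) :=
  calc ∑ i, (a * b i) ⊗ₜ[K] dualBasis τ hτ b i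
        = ∑ i, ∑ j, τ (a * b i) (dualBasis τ hτ b j) • (b j ⊗ₜ[K] dualBasis τ hτ b i) := by
        simp_rw [smul_tmul', ← sum_tmul, sum_regularTraceForm_dualBasis_smul]
    _ = ∑ i, ∑ j, τ (dualBasis τ hτ b i * a) (b j) • (b i ⊗ₜ[K] dualBasis τ hτ b j) := by
        rw [Finset.sum_comm]
        refine Finset.sum_congr rfl fun i _ => Finset.sum_congr rfl fun j _ => ?_
        rw [regularTraceForm_isSymm.eq, regularTraceForm_mul_left]
    _ = ∑ i, b i ⊗ₜ[K] (dualBasis τ hτ b i * a) := by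
        simp_rw [← tmul_smul, ← tmul_sum, sum_regularTraceForm_smul_dualBasis]

theorem exists_sum_mul_eq_one_and_sum_mul_tmul_eq [CharZero K] [FiniteDimensional K A]
    (hJ : Ring.jacobson A = ⊥) :
    ∃ (n : ℕ) (x y : Fin n → A), ∑ i, x i * y i = 1 ∧
      ∀ a : A, ∑ i, (a * x i) ⊗ₜ[K] y i = ∑ i, x i ⊗ₜ[K] (y i * a) :=
  have hτ := regularTraceForm_nondegenerate hJ
  ⟨_, _, _, sum_mul_dualBasis_regularTraceForm_eq_one hτ (Module.finBasis K A),
    sum_mul_tmul_dualBasis_eq_sum_tmul_mul hτ (Module.finBasis K A)⟩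

end Separability

theorem AlgHom.mul_sum_mul_eq_sum_mul_mul {K R B : Type*} [CommRing K] [Ring R] [Algebra K R]
    [Ring B] [Algebra K B] {ι : Type*} [Fintype ι] {x y : ι → R}
    (hxy : ∀ a : R, ∑ i, (a * x i) ⊗ₜ[K] y i = ∑ i, x i ⊗ₜ[K] (y i * a))
    (ψ χ : R →ₐ[K] B) (a : R) :
    ψ a * ∑ i, ψ (x i) * χ (y i) = (∑ i, ψ (x i) * χ (y i)) * χ a := by
  have := congrArg (TensorProduct.lift ((LinearMap.mul K B).compl₁₂ ψ.toLinearMap χ.toLinearMap))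
    (hxy a)
  simpa [Finset.mul_sum, Finset.sum_mul, mul_assoc] using this

theorem exists_conj_of_norm_sub_le {K A B : Type*} [Field K] [CharZero K] [NormedRing A]
    [Algebra K A] [FiniteDimensional K A] [NormedRing B] [Algebra K B] [CompleteSpace B]
    (ψ : A →ₐ[K] B) (hψ : ∀ a ∈ Ring.jacobson A, ψ a = 0) :
    ∃ ε > 0, ∀ χ : A →ₐ[K] B, (∀ a ∈ Ring.jacobson A, χ a = 0) →
      (∀ a, ‖χ a - ψ a‖ ≤ ε * ‖a‖) → ∃ u : Bˣ, ∀ a, ψ a = u * χ a * ↑u⁻¹ := by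
  obtain ⟨n, x, yq, hxy1, hxy⟩ :=
    exists_sum_mul_eq_one_and_sum_mul_tmul_eq (K := K) (Ring.jacobson_quotient_jacobson A)
  choose y hy using fun i => Ideal.Quotient.mk_surjective (yq i)
  let ψ' := Ideal.Quotient.liftₐ _ ψ hψ
  set M := ∑ i, ‖ψ' (x i)‖ * ‖y i‖
  have hM : 0 ≤ M := by positivity
  refine ⟨(M + 1)⁻¹, by positivity, fun χ hχ hχψ => ?_⟩
  let χ' := Ideal.Quotient.liftₐ _ χ hχ
  set u := ∑ i, ψ' (x i) * χ' (yq i)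
  have hu : 1 - u = ∑ i, ψ' (x i) * (ψ (y i) - χ (y i)) := by
    rw [← map_one ψ', ← hxy1, map_sum, ← Finset.sum_sub_distrib]
    simp_rw [map_mul, ← mul_sub, ← hy]
    rfl
  have hu1 : ‖1 - u‖ < 1 :=
    calc ‖1 - u‖ ≤ ∑ i, ‖ψ' (x i)‖ * ‖ψ (y i) - χ (y i)‖ :=
          hu ▸ norm_sum_le_of_le _ fun i _ => norm_mul_le _ _
      _ ≤ ∑ i, ‖ψ' (x i)‖ * ((M + 1)⁻¹ * ‖y i‖) := by
          gcongr with i; rw [norm_sub_rev]; exact hχψ _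
      _ = (M + 1)⁻¹ * M := by
          rw [Finset.mul_sum]; exact Finset.sum_congr rfl fun i _ => by ring
      _ < 1 := by rw [inv_mul_lt_iff₀ (by positivity)]; linarith
  obtain ⟨v, hv⟩ := sub_sub_cancel (1 : B) u ▸ isUnit_one_sub_of_norm_lt_one hu1
  refine ⟨v, fun a => ?_⟩
  have hint : ψ a * v = v * χ a := by
    rw [hv]; exact AlgHom.mul_sum_mul_eq_sum_mul_mul hxy ψ' χ' (Ideal.Quotient.mk _ a)
  rw [← hint, Units.mul_inv_cancel_right]

theorem orbit_closed_of_kills_radical_general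
    {A B : Type*} [NormedRing A] [NormedAlgebra ℝ A] [FiniteDimensional ℝ A]
    [NormedRing B] [NormedAlgebra ℝ B] [CompleteSpace B]
    (φ : A →L[ℝ] B)
    (hrad : ∀ a : A, a ∈ Ideal.jacobson (⊥ : Ideal A) → φ a = 0) :
    IsClosed {ψ : {T : A →L[ℝ] B // T 1 = 1 ∧ ∀ a a' : A, T (a * a') = T a * T a'} |
      ∃ u : Bˣ, ∀ a : A, (ψ : A →L[ℝ] B) a = (u : B) * φ a * (↑u⁻¹ : B)} := by
  set H := {T : A →L[ℝ] B // T 1 = 1 ∧ ∀ a a' : A, T (a * a') = T a * T a'}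
  let toAlgHom (T : H) : A →ₐ[ℝ] B := .ofLinearMap T.1.toLinearMap T.2.1 T.2.2
  refine isClosed_of_closure_subset fun ψ hψ => ?_
  rw [Ideal.jacobson_bot] at hrad
  have hkill : ∀ a ∈ Ring.jacobson A, (ψ : A →L[ℝ] B) a = 0 := fun a ha =>
    closure_minimal (by rintro χ ⟨u, hu⟩; show χ.1 a = 0; rw [hu, hrad a ha, mul_zero, zero_mul])
      (isClosed_eq ((ContinuousLinearMap.apply ℝ B a).continuous.comp continuous_subtype_val)
        continuous_const) hψ
  obtain ⟨ε, hε, hopen⟩ := exists_conj_of_norm_sub_le (toAlgHom ψ) hkill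
  obtain ⟨χ, ⟨v, hv⟩, hχψ⟩ := Metric.mem_closure_iff.mp hψ ε hε
  obtain ⟨u, hu⟩ := hopen (toAlgHom χ) (fun a ha => by simp [toAlgHom, hv, hrad a ha]) fun a =>
    calc ‖χ.1 a - ψ.1 a‖ = ‖(χ.1 - ψ.1) a‖ := rfl
      _ ≤ ‖χ.1 - ψ.1‖ * ‖a‖ := (χ.1 - ψ.1).le_opNorm a
      _ ≤ ε * ‖a‖ := by
          gcongr; rw [← dist_eq_norm, dist_comm]; exact hχψ.le
  refine ⟨u * v, fun a => ?_⟩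
  rw [show ψ.1 a = u * χ.1 a * ↑u⁻¹ from hu a, hv a]
  simp [mul_assoc]

/-- Let `φ : A → B` be a unital homomorphism of (real) Banach algebras
with `A` finite-dimensional, realized as a continuous linear map `φ : A →L[ℝ] B`
which is unital and multiplicative.  If `φ` annihilates the Jacobson radical of
`A`, then its orbit under conjugation by the group `B^×` of invertible elements is
closed in the space of unital Banach-algebra homomorphisms `A → B` (a subspace of
`A →L[ℝ] B` with the operator-norm topology). -/
theorem orbit_closed_of_kills_radical
    {A B : Type*} [NormedRing A] [NormedAlgebra ℝ A] [FiniteDimensional ℝ A]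
    [NormedRing B] [NormedAlgebra ℝ B] [CompleteSpace B]
    (φ : A →L[ℝ] B) (hφ1 : φ 1 = 1) (hφm : ∀ a a' : A, φ (a * a') = φ a * φ a')
    (hrad : ∀ a : A, a ∈ Ideal.jacobson (⊥ : Ideal A) → φ a = 0) :
    IsClosed {ψ : {T : A →L[ℝ] B // T 1 = 1 ∧ ∀ a a' : A, T (a * a') = T a * T a'} |
      ∃ u : Bˣ, ∀ a : A, (ψ : A →L[ℝ] B) a = (u : B) * φ a * (↑u⁻¹ : B)} :=
  orbit_closed_of_kills_radical_general φ hrad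
end

section
/- Let A and B be unital Banach algebras with A finite-dimensional semisimple, and φ: A → B a unital algebra homomorphism, making B an A-bimodule via a·b·a' := φ(a)bφ(a'). Then a bounded linear map f: A → B is tangent at φ to the set of unital algebra homomorphisms A → B if and only if f is a Hochschild 1-cocycle: f(aa') = φ(a)f(a') + f(a)φ(a') for all a, a' ∈ A (and f(1)=0). In particular, if φ_t is a differentiable path of unital algebra homomorphisms with φ₀ = φ, then d/dt|₀ φ_t ∈ Z¹(A,B). -/
/-!
Over a field of characteristic zero the trace form `τ(a, b) = tr (x ↦ a * b * x)` of a
finite-dimensional semisimple algebra is nondegenerate. For a basis `bᵢ` with `τ`-dual basis `bᵢ*`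
the Casimir element `∑ bᵢ ⊗ bᵢ*` is balanced (`∑ a bᵢ ⊗ bᵢ* = ∑ bᵢ ⊗ bᵢ* a`) and `∑ bᵢ bᵢ* = 1`,
so every 1-cocycle `f` for `φ` is inner: `f a = φ a * c - c * φ a` with `c = ∑ φ(bᵢ) f(bᵢ*)`.
Such an `f` is the velocity at `0` of the path `t ↦ exp(-tc) φ(·) exp(tc)` of unital
homomorphisms, hence tangent. Conversely, the constraints `T 1 = 1` and
`T (a a') = T a * T a'` are smooth and constant on the set of homomorphisms, so their
differentials at `φ` vanish on its tangent cone, which is the cocycle identity.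
-/

open LinearMap Module NormedSpace

section TraceForm

variable (K A : Type*) [Field K] [Ring A] [Algebra K A]

noncomputable def leftMulTraceForm : LinearMap.BilinForm K A :=
  (LinearMap.mul K A).compr₂ ((LinearMap.trace K A).comp (LinearMap.mul K A))

variable {K A}

lemma leftMulTraceForm_apply (a b : A) :
    leftMulTraceForm K A a b = trace K A (mulLeft K (a * b)) := rfl

lemma leftMulTraceForm_comm (a b : A) :
    leftMulTraceForm K A a b = leftMulTraceForm K A b a := by
  simp only [leftMulTraceForm_apply, mulLeft_mul, ← Module.End.mul_eq_comp]
  exact trace_mul_comm K _ _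

lemma leftMulTraceForm_mul_assoc (a b c : A) :
    leftMulTraceForm K A (a * b) c = leftMulTraceForm K A a (b * c) := by
  simp only [leftMulTraceForm_apply, mul_assoc]

lemma leftMulTraceForm_isSymm : (leftMulTraceForm K A).IsSymm := ⟨leftMulTraceForm_comm⟩

lemma leftMulTraceForm_nondegenerate [CharZero K] [FiniteDimensional K A] [IsSemisimpleRing A] :
    (leftMulTraceForm K A).Nondegenerate := by
  suffices h : (leftMulTraceForm K A).SeparatingLeft from
    ⟨h, fun a ha => h a fun b => (leftMulTraceForm_comm a b).trans (ha b)⟩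
  intro a ha
  let N : Ideal A :=
    { carrier := {x | ∀ y, leftMulTraceForm K A x y = 0}
      add_mem' := fun hx hy y => by simp [hx y, hy y]
      zero_mem' := fun y => by simp
      smul_mem' := fun r x hx y => by
        rw [smul_eq_mul, leftMulTraceForm_comm, ← leftMulTraceForm_mul_assoc,
          leftMulTraceForm_comm, hx] }
  obtain ⟨e, he, hNe⟩ := IsSemisimpleRing.ideal_eq_span_idempotent N
  have heN : e ∈ N := hNe ▸ Ideal.mem_span_singleton_self e
  -- `N` is generated by an idempotent `e`, and `(e * ·)` is an idempotent of trace `τ(e, 1) = 0`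
  have he0 : e = 0 := by
    have hLe : Algebra.lmul K A e = 0 :=
      (he.map (Algebra.lmul K A)).eq_zero_of_trace_eq_zero (by rw [← mul_one e]; exact heN 1)
    simpa using congr($hLe 1)
  have haN : a ∈ N := ha
  rwa [hNe, he0, Ideal.span_singleton_eq_bot.mpr rfl, Ideal.mem_bot] at haN

end TraceForm

section Casimir

variable {K A : Type*} [Field K] [CharZero K] [Ring A] [Algebra K A] [FiniteDimensional K A]
  [IsSemisimpleRing A] {ι : Type*} [Fintype ι] [DecidableEq ι]

noncomputable def traceDualBasis (b : Basis ι K A) : Basis ι K A :=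
  (leftMulTraceForm K A).dualBasis leftMulTraceForm_nondegenerate b

lemma traceDualBasis_repr (b : Basis ι K A) (x : A) (i : ι) :
    (traceDualBasis b).repr x i = leftMulTraceForm K A x (b i) :=
  LinearMap.BilinForm.dualBasis_repr_apply _ _ _ _

lemma repr_eq_leftMulTraceForm_traceDualBasis (b : Basis ι K A) (x : A) (i : ι) :
    b.repr x i = leftMulTraceForm K A x (traceDualBasis b i) := by
  conv_lhs => rw [← LinearMap.BilinForm.dualBasis_dualBasis leftMulTraceForm_nondegenerate
    leftMulTraceForm_isSymm b]
  exact LinearMap.BilinForm.dualBasis_repr_apply _ _ _ _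

lemma sum_mul_left_traceDualBasis_eq_mul_right {M : Type*} [AddCommGroup M] [Module K M]
    (F : A →ₗ[K] A →ₗ[K] M) (b : Basis ι K A) (a : A) :
    ∑ i, F (a * b i) (traceDualBasis b i) = ∑ i, F (b i) (traceDualBasis b i * a) := by
  let b' := traceDualBasis b
  calc ∑ i, F (a * b i) (b' i)
      = ∑ i, ∑ j, leftMulTraceForm K A (a * b i) (b' j) • F (b j) (b' i) := by
        refine Finset.sum_congr rfl fun i _ => ?_
        conv_lhs => rw [← b.sum_repr (a * b i)]
        simp [repr_eq_leftMulTraceForm_traceDualBasis, b', map_sum]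
    _ = ∑ j, ∑ i, leftMulTraceForm K A (b' j * a) (b i) • F (b j) (b' i) := by
        rw [Finset.sum_comm]
        refine Finset.sum_congr rfl fun j _ => Finset.sum_congr rfl fun i _ => ?_
        rw [leftMulTraceForm_comm, leftMulTraceForm_mul_assoc]
    _ = ∑ j, F (b j) (b' j * a) := by
        refine Finset.sum_congr rfl fun j _ => ?_
        conv_rhs => rw [← b'.sum_repr (b' j * a)]
        simp [b', traceDualBasis_repr, map_sum]

lemma sum_mul_traceDualBasis (b : Basis ι K A) : ∑ i, b i * traceDualBasis b i = 1 := by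
  refine sub_eq_zero.mp ((leftMulTraceForm_nondegenerate (K := K)).1 _ fun w => ?_)
  rw [map_sub, LinearMap.sub_apply, sub_eq_zero]
  calc leftMulTraceForm K A (∑ i, b i * traceDualBasis b i) w
      = ∑ i, leftMulTraceForm K A (b i) (traceDualBasis b i * w) := by
        simp only [map_sum, LinearMap.sum_apply, leftMulTraceForm_mul_assoc]
    _ = ∑ i, leftMulTraceForm K A (w * b i) (traceDualBasis b i) :=
        (sum_mul_left_traceDualBasis_eq_mul_right (leftMulTraceForm K A) b w).symm
    _ = trace K A (mulLeft K w) := by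
        simp [← repr_eq_leftMulTraceForm_traceDualBasis, trace_eq_matrix_trace K b, Matrix.trace,
          Algebra.leftMulMatrix_eq_repr_mul]
    _ = leftMulTraceForm K A 1 w := by rw [leftMulTraceForm_apply, one_mul]

end Casimir

theorem exists_eq_mul_sub_mul_of_cocycle {K A B : Type*} [Field K] [CharZero K] [Ring A]
    [Algebra K A] [FiniteDimensional K A] [IsSemisimpleRing A] [Ring B] [Algebra K B]
    (φ : A →ₐ[K] B) (f : A →ₗ[K] B) (hf : ∀ a a', f (a * a') = φ a * f a' + f a * φ a') :
    ∃ c : B, ∀ a, f a = φ a * c - c * φ a := by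
  let b := Module.finBasis K A
  let b' := traceDualBasis b
  refine ⟨∑ i, φ (b i) * f (b' i), fun a => eq_sub_of_add_eq ?_⟩
  calc f a + (∑ i, φ (b i) * f (b' i)) * φ a
      = ∑ i, (φ (b i * b' i) * f a + φ (b i) * f (b' i) * φ a) := by
        rw [Finset.sum_add_distrib, ← Finset.sum_mul, ← Finset.sum_mul, ← map_sum,
          sum_mul_traceDualBasis, map_one, one_mul]
    _ = ∑ i, φ (b i) * f (b' i * a) := by
        simp only [hf, map_mul, mul_add, mul_assoc]
    _ = ∑ i, φ (a * b i) * f (b' i) := by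
        have := sum_mul_left_traceDualBasis_eq_mul_right
          ((LinearMap.mul K B).compl₁₂ φ.toLinearMap f) b a
        exact this.symm
    _ = φ a * ∑ i, φ (b i) * f (b' i) := by
        simp only [map_mul, mul_assoc, Finset.mul_sum]

section TangentCone

variable {𝕜 E F : Type*} [NontriviallyNormedField 𝕜] [NormedAddCommGroup E] [NormedSpace 𝕜 E]
  [NormedAddCommGroup F] [NormedSpace 𝕜 F]

theorem HasFDerivWithinAt.apply_eq_zero_of_eqOn_const {g : E → F} {g' : E →L[𝕜] F} {s : Set E}
    {x y : E} {c : F} (hg : HasFDerivWithinAt g g' s x) (hgc : Set.EqOn g (fun _ => c) s)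
    (hx : x ∈ s) (hy : y ∈ tangentConeAt 𝕜 s x) : g' y = 0 :=
  hg.unique_on ((hasFDerivWithinAt_const c x s).congr hgc (hgc hx)) hy

theorem HasDerivAt.mem_tangentConeAt {γ : 𝕜 → E} {γ' : E} {s : Set E} {t : 𝕜}
    (hγ : HasDerivAt γ γ' t) (hs : ∀ u, γ u ∈ s) : γ' ∈ tangentConeAt 𝕜 s (γ t) := by
  have h := hγ.hasFDerivAt.hasFDerivWithinAt.mapsTo_tangent_cone
    (by simp : (1 : 𝕜) ∈ tangentConeAt 𝕜 Set.univ t)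
  simp only [Set.image_univ, ContinuousLinearMap.toSpanSingleton_apply, one_smul] at h
  exact tangentConeAt_mono (Set.range_subset_iff.mpr hs) h

end TangentCone

section UnitalMulMaps

variable (𝕜 A B : Type*) [NontriviallyNormedField 𝕜] [NormedRing A] [NormedSpace 𝕜 A]
  [NormedRing B] [NormedAlgebra 𝕜 B]

def unitalMulMaps : Set (A →L[𝕜] B) := {T | T 1 = 1 ∧ ∀ a a', T (a * a') = T a * T a'}

variable {𝕜 A B}

theorem cocycle_of_mem_tangentConeAt {φ f : A →L[𝕜] B} (hφ : φ ∈ unitalMulMaps 𝕜 A B)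
    (hf : f ∈ tangentConeAt 𝕜 (unitalMulMaps 𝕜 A B) φ) :
    f 1 = 0 ∧ ∀ a a', f (a * a') = φ a * f a' + f a * φ a' := by
  refine ⟨(ContinuousLinearMap.apply 𝕜 B (1 : A)).hasFDerivAt.hasFDerivWithinAt
    |>.apply_eq_zero_of_eqOn_const (fun T hT => hT.1) hφ hf, fun a a' => ?_⟩
  have hev (x : A) := (ContinuousLinearMap.apply 𝕜 B x).hasFDerivAt (x := φ)
  have h := ((hev (a * a')).sub ((hev a).mul' (hev a'))).hasFDerivWithinAt
    |>.apply_eq_zero_of_eqOn_const (c := 0) (fun T hT => sub_eq_zero.mpr (hT.2 a a')) hφ hf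
  simpa [sub_eq_zero] using h

end UnitalMulMaps

section ConjExp

variable {A B : Type*} [NormedRing A] [NormedSpace ℝ A] [NormedRing B] [NormedAlgebra ℝ B]

lemma exp_neg_mul_exp [CompleteSpace B] (x : B) : exp (-x) * exp x = 1 := by
  let _ : NormedAlgebra ℚ B := .restrictScalars ℚ ℝ B
  rw [← exp_add_of_commute (Commute.refl x).neg_left, neg_add_cancel, exp_zero]

noncomputable def conjExp (φ : A →L[ℝ] B) (c : B) (t : ℝ) : A →L[ℝ] B :=
  (ContinuousLinearMap.mulLeftRight ℝ B (exp (t • -c)) (exp (t • c))).comp φ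

lemma conjExp_apply (φ : A →L[ℝ] B) (c : B) (t : ℝ) (a : A) :
    conjExp φ c t a = exp (t • -c) * φ a * exp (t • c) := rfl

lemma conjExp_zero (φ : A →L[ℝ] B) (c : B) : conjExp φ c 0 = φ := by
  ext a
  simp [conjExp_apply]

lemma conjExp_mem_unitalMulMaps [CompleteSpace B] {φ : A →L[ℝ] B}
    (hφ : φ ∈ unitalMulMaps ℝ A B) (c : B) (t : ℝ) : conjExp φ c t ∈ unitalMulMaps ℝ A B := by
  have hcancel : exp (t • c) * exp (t • -c) = 1 := by
    simpa [smul_neg] using exp_neg_mul_exp (-(t • c))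
  refine ⟨by rw [conjExp_apply, hφ.1, mul_one, smul_neg, exp_neg_mul_exp], fun a a' => ?_⟩
  simp only [conjExp_apply, hφ.2, mul_assoc]
  rw [← mul_assoc (exp (t • c)), hcancel, one_mul]

lemma hasDerivAt_conjExp_zero [CompleteSpace B] {φ f : A →L[ℝ] B} {c : B}
    (hf : ∀ a, f a = φ a * c - c * φ a) : HasDerivAt (conjExp φ c) f 0 := by
  have hexp (x : B) : HasDerivAt (fun t : ℝ => exp (t • x)) x 0 := by
    simpa using hasDerivAt_exp_smul_const x (0 : ℝ)
  have h := ((ContinuousLinearMap.mulLeftRight ℝ B).hasDerivAt_of_bilinear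
    (fun _ => hexp (-c)) (fun _ => hexp c)).clm_comp (hasDerivAt_const (0 : ℝ) φ)
  refine h.congr_deriv (ContinuousLinearMap.ext fun a => ?_)
  simp only [smul_neg, zero_smul, neg_zero, exp_zero, map_neg, _root_.neg_apply,
    ContinuousLinearMap.add_comp, ContinuousLinearMap.neg_comp, ContinuousLinearMap.comp_zero,
    add_zero, _root_.add_apply, ContinuousLinearMap.comp_apply,
    ContinuousLinearMap.mulLeftRight_apply, one_mul, mul_one, hf]
  noncomm_ring

end ConjExp

/-- Let `A`, `B` be unital (real) Banach algebras with `A`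
finite-dimensional and semisimple, and `φ : A → B` a unital algebra homomorphism
(a continuous linear map which is unital and multiplicative).  A bounded linear map
`f : A → B` is tangent at `φ` to the set of unital algebra homomorphisms `A → B`
iff `f` is a Hochschild 1-cocycle for the `φ`-induced bimodule structure:
`f(aa') = φ(a)f(a') + f(a)φ(a')` (and `f(1) = 0`).  In particular the derivative at
`0` of a differentiable path of unital homomorphisms through `φ` is a 1-cocycle. -/
theorem tangent_space_is_hochschild_cocycles
    {A B : Type*} [NormedRing A] [NormedAlgebra ℝ A] [FiniteDimensional ℝ A]
    [IsSemisimpleRing A] [NormedRing B] [NormedAlgebra ℝ B] [CompleteSpace B]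
    (φ : A →L[ℝ] B) (hφ1 : φ 1 = 1) (hφm : ∀ a a' : A, φ (a * a') = φ a * φ a') :
    (∀ f : A →L[ℝ] B,
      f ∈ tangentConeAt ℝ
          {T : A →L[ℝ] B | T 1 = 1 ∧ ∀ a a' : A, T (a * a') = T a * T a'} φ ↔
        (f 1 = 0 ∧ ∀ a a' : A, f (a * a') = φ a * f a' + f a * φ a')) ∧
    (∀ (φt : ℝ → (A →L[ℝ] B)) (f : A →L[ℝ] B),
      (∀ t : ℝ, (φt t) 1 = 1 ∧ ∀ a a' : A, (φt t) (a * a') = (φt t) a * (φt t) a') →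
      φt 0 = φ → HasDerivAt φt f 0 →
        f 1 = 0 ∧ ∀ a a' : A, f (a * a') = φ a * f a' + f a * φ a') := by
  have hφ : φ ∈ unitalMulMaps ℝ A B := ⟨hφ1, hφm⟩
  refine ⟨fun f => ⟨cocycle_of_mem_tangentConeAt hφ, fun hf => ?_⟩,
    fun φt f hφt h0 hf => cocycle_of_mem_tangentConeAt hφ (h0 ▸ hf.mem_tangentConeAt hφt)⟩
  obtain ⟨c, hc⟩ := exists_eq_mul_sub_mul_of_cocycle
    (AlgHom.ofLinearMap φ.toLinearMap hφ1 hφm) f.toLinearMap hf.2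
  have h := (hasDerivAt_conjExp_zero hc).mem_tangentConeAt (conjExp_mem_unitalMulMaps hφ c)
  rwa [conjExp_zero] at h
end
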